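/- arXiv:1505.02061 — 2 statements merged into one kernel-verified Lean document; each statement's English description precedes it below -/
import Mathlib

section
/- Let K ∈ ℝ, N ∈ (1,∞), let I ⊆ ℝ be an interval and let h : I → [0,∞) satisfy, for all t₀ < t₁ in I and all s ∈ [0,1], the weak (K,N)-concavity inequality h((1−s)t₀ + s t₁)^{1/(N−1)} ≥ σ_{K,N−1}^{(1−s)}(t₁−t₀)·h(t₀)^{1/(N−1)} + σ_{K,N−1}^{(s)}(t₁−t₀)·h(t₁)^{1/(N−1)}. Then the set {t ∈ I : h(t) > 0} is convex (an interval), and h is locally Lipschitz continuous on the interior of {t ∈ I : h(t) > 0}. -/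
noncomputable section

open MeasureTheory Set Filter Metric Topology ENNReal NNReal

namespace CDMMS

variable {X : Type*} [MetricSpace X]

/-- The set of (constant speed) geodesics of `X`, parametrized on `[0,1]`,
encoded as functions `ℝ → X`. -/
def GeoSet (X : Type*) [MetricSpace X] : Set (ℝ → X) :=
  {γ | ∀ s ∈ Icc (0:ℝ) 1, ∀ t ∈ Icc (0:ℝ) 1, dist (γ s) (γ t) = |s - t| * dist (γ 0) (γ 1)}

/-- `(X,d)` is a geodesic space: any two points are joined by a geodesic. -/
def IsGeodesicSpace (X : Type*) [MetricSpace X] : Prop :=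
  ∀ x y : X, ∃ γ ∈ GeoSet X, γ 0 = x ∧ γ 1 = y

variable [MeasurableSpace X]

/-- `π` is a coupling of `μ₀` and `μ₁`. -/
def IsCoupling (π : Measure (X × X)) (μ₀ μ₁ : Measure X) : Prop :=
  π.map Prod.fst = μ₀ ∧ π.map Prod.snd = μ₁

/-- The squared `L²`-Wasserstein distance, valued in `ℝ≥0∞`. -/
def W2sq (μ₀ μ₁ : Measure X) : ℝ≥0∞ :=
  sInf ((fun π : Measure (X × X) => ∫⁻ p, ENNReal.ofReal (dist p.1 p.2 ^ 2) ∂π) ''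
    {π | IsCoupling π μ₀ μ₁})

/-- `μ` is a Borel probability measure with finite second moment which is absolutely
continuous with respect to `m`. -/
def P2ac (m μ : Measure X) : Prop :=
  IsProbabilityMeasure μ ∧ (∃ x₀ : X, ∫⁻ x, ENNReal.ofReal (dist x x₀ ^ 2) ∂μ ≠ ∞) ∧ μ ≪ m

/-- `ν` is an optimal dynamical plan from `μ₀` to `μ₁`: it is a probability measure
concentrated on geodesics whose endpoint marginals form an optimal coupling. -/
def IsOptGeo (ν : Measure (ℝ → X)) (μ₀ μ₁ : Measure X) : Prop :=
  IsProbabilityMeasure ν ∧ ν (GeoSet X)ᶜ = 0 ∧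
  IsCoupling (ν.map (fun γ => (γ 0, γ 1))) μ₀ μ₁ ∧
  (∫⁻ γ, ENNReal.ofReal (dist (γ 0) (γ 1) ^ 2) ∂ν) = W2sq μ₀ μ₁

/-- `F` is a set of non-branching geodesics. -/
def IsNonBranchingSet (F : Set (ℝ → X)) : Prop :=
  ∀ γ₁ ∈ F, ∀ γ₂ ∈ F,
    (∃ tb ∈ Ioo (0:ℝ) 1, ∀ t ∈ Icc (0:ℝ) tb, γ₁ t = γ₂ t) →
      ∀ t ∈ Icc (0:ℝ) 1, γ₁ t = γ₂ t

/-- `(X,d,m)` is essentially non-branching. -/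
def EssNonBranching (m : Measure X) : Prop :=
  ∀ μ₀ μ₁ : Measure X, P2ac m μ₀ → P2ac m μ₁ →
    ∀ ν : Measure (ℝ → X), IsOptGeo ν μ₀ μ₁ →
      ∃ F ⊆ GeoSet X, IsNonBranchingSet F ∧ ν Fᶜ = 0

/-- The distortion coefficient `σ_{K,N}^{(t)}(θ)`, valued in `ℝ≥0∞`. -/
def sigmaC (K N t θ : ℝ) : ℝ≥0∞ :=
  if N * Real.pi ^ 2 ≤ K * θ ^ 2 then ∞
  else if 0 < K * θ ^ 2 then
    ENNReal.ofReal (Real.sin (t * θ * Real.sqrt (K / N)) / Real.sin (θ * Real.sqrt (K / N)))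
  else if K * θ ^ 2 = 0 then ENNReal.ofReal t
  else if N = 0 then ENNReal.ofReal t
  else if 0 < N then
    ENNReal.ofReal (Real.sinh (t * θ * Real.sqrt (-K / N)) / Real.sinh (θ * Real.sqrt (-K / N)))
  else ENNReal.ofReal t

/-- The distortion coefficient `τ_{K,N}^{(t)}(θ) = t^{1/N} σ_{K,N-1}^{(t)}(θ)^{(N-1)/N}`. -/
def tauC (K N t θ : ℝ) : ℝ≥0∞ :=
  ENNReal.ofReal t ^ ((1:ℝ) / N) * sigmaC K (N - 1) t θ ^ ((N - 1) / N)

/-- The defining interpolation inequality of the curvature-dimension conditions, for a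
dynamical plan `ν`, with interpolation coefficients `coeff`. -/
def CDInterp (coeff : ℝ → ℝ → ℝ≥0∞) (N : ℝ) (m : Measure X) (ν : Measure (ℝ → X)) : Prop :=
  ∃ ρ : ℝ → X → ℝ≥0∞,
    (∀ t ∈ Icc (0:ℝ) 1, ν.map (fun γ => γ t) = m.withDensity (ρ t)) ∧
    ∀ t ∈ Icc (0:ℝ) 1, ∀ᵐ γ ∂ν,
      coeff (1 - t) (dist (γ 0) (γ 1)) * ρ 0 (γ 0) ^ (-(1:ℝ) / N) +
        coeff t (dist (γ 0) (γ 1)) * ρ 1 (γ 1) ^ (-(1:ℝ) / N)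
        ≤ ρ t (γ t) ^ (-(1:ℝ) / N)

/-- The curvature-dimension condition `CD(K,N)` (for essentially non-branching spaces). -/
def CD (K N : ℝ) (m : Measure X) : Prop :=
  ∀ μ₀ μ₁ : Measure X, P2ac m μ₀ → P2ac m μ₁ →
    ∃ ν : Measure (ℝ → X), IsOptGeo ν μ₀ μ₁ ∧ CDInterp (fun t θ => tauC K N t θ) N m ν

/-- The reduced curvature-dimension condition `CD*(K,N)` (for essentially non-branching
spaces). -/
def CDstar (K N : ℝ) (m : Measure X) : Prop :=
  ∀ μ₀ μ₁ : Measure X, P2ac m μ₀ → P2ac m μ₁ →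
    ∃ ν : Measure (ℝ → X), IsOptGeo ν μ₀ μ₁ ∧ CDInterp (fun t θ => sigmaC K N t θ) N m ν

/-- The local curvature-dimension condition `CD_loc(K,N)`. -/
def CDloc (K N : ℝ) (m : Measure X) : Prop :=
  ∀ x : X, ∃ U ∈ 𝓝 x,
    ∀ μ₀ μ₁ : Measure X, P2ac m μ₀ → P2ac m μ₁ → μ₀ Uᶜ = 0 → μ₁ Uᶜ = 0 →
      ∃ ν : Measure (ℝ → X), IsOptGeo ν μ₀ μ₁ ∧ CDInterp (fun t θ => tauC K N t θ) N m ν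

/-- The slope (local Lipschitz constant) `|∇f|(x)`; it equals `0` at isolated points. -/
def slope (f : X → ℝ) (x : X) : ℝ :=
  limsup (fun y => |f x - f y| / dist x y) (𝓝[≠] x)

/-- `f` is a (real valued) Lipschitz function. -/
def IsLip (f : X → ℝ) : Prop := ∃ C : ℝ≥0, LipschitzWith C f

/-- The first nontrivial eigenvalue `λ^{1,p}` of the `p`-Laplacian of `(X,d,m)`,
defined variationally. -/
def lamOneP (m : Measure X) (p : ℝ) : ℝ :=
  sInf {r : ℝ | ∃ f : X → ℝ, IsLip f ∧ MemLp f (ENNReal.ofReal p) m ∧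
    (∫ x, |f x| ^ p ∂m) ≠ 0 ∧ (∫ x, f x * |f x| ^ (p - 2) ∂m) = 0 ∧
    r = (∫ x, slope f x ^ p ∂m) / ∫ x, |f x| ^ p ∂m}

/-- The set of intermediate points at time `t` between `A₀` and `A₁`. -/
def interSet (A₀ A₁ : Set X) (t : ℝ) : Set X :=
  (fun γ : ℝ → X => γ t) '' {γ | γ ∈ GeoSet X ∧ γ 0 ∈ A₀ ∧ γ 1 ∈ A₁}

/-- The minimal (if `K ≥ 0`), resp. maximal (if `K < 0`), length of geodesics from
`A₀` to `A₁`. -/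
def thetaBM (K : ℝ) (A₀ A₁ : Set X) : ℝ :=
  if 0 ≤ K then sInf {d | ∃ x₀ ∈ A₀, ∃ x₁ ∈ A₁, d = dist x₀ x₁}
  else sSup {d | ∃ x₀ ∈ A₀, ∃ x₁ ∈ A₁, d = dist x₀ x₁}

open Classical in
/-- The relative entropy `Ent_m(μ) ∈ [0,∞]`. -/
def relEnt (m μ : Measure X) : ℝ≥0∞ :=
  if μ ≪ m ∧ Integrable (fun x => (μ.rnDeriv m x).toReal * Real.log (μ.rnDeriv m x).toReal) m
  then ENNReal.ofReal (∫ x, (μ.rnDeriv m x).toReal * Real.log (μ.rnDeriv m x).toReal ∂m)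
  else ∞

/-- The (outer) Minkowski content `m⁺(E)`. -/
def minkContent (m : Measure X) (E : Set X) : ℝ :=
  liminf (fun ε : ℝ => ((m (thickening ε E)).toReal - (m E).toReal) / ε) (𝓝[>] (0:ℝ))

/-- The Cheeger (isoperimetric) constant `h_{(X,d,m)}`. -/
def cheegerConst (m : Measure X) : ℝ :=
  sInf {r : ℝ | ∃ E : Set X, MeasurableSet E ∧ (m E).toReal ∈ Ioc (0:ℝ) (1/2) ∧
    r = minkContent m E / (m E).toReal}

/-! ### One-dimensional model objects -/

/-- Membership in the smooth model family `F_{K,N,D}`: probability measures on `ℝ`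
supported in `[0,D]` with a `C²` density on `(0,D)` satisfying
`(h^{1/(N-1)})'' + K/(N-1) · h^{1/(N-1)} ≤ 0`. -/
def memF (K N D : ℝ) (μ : Measure ℝ) : Prop :=
  IsProbabilityMeasure μ ∧ μ (Icc (0:ℝ) D)ᶜ = 0 ∧
  ∃ h : ℝ → ℝ, (∀ x, 0 ≤ h x) ∧
    μ = volume.withDensity (fun x => ENNReal.ofReal (h x)) ∧
    ContDiffOn ℝ 2 h (Ioo 0 D) ∧
    ∀ t ∈ Ioo (0:ℝ) D,
      deriv (deriv fun s => h s ^ ((1:ℝ) / (N - 1))) t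
        + K / (N - 1) * h t ^ ((1:ℝ) / (N - 1)) ≤ 0

/-- The weak `(K,N)`-concavity (synthetic `CD(K,N)`) inequality for a density `h`,
required for `t₀ < t₁` ranging in a set `S`. -/
def SynthCD (K N : ℝ) (h : ℝ → ℝ) (S : Set ℝ) : Prop :=
  ∀ t₀ ∈ S, ∀ t₁ ∈ S, t₀ < t₁ → ∀ s ∈ Icc (0:ℝ) 1,
    sigmaC K (N - 1) (1 - s) (t₁ - t₀) * ENNReal.ofReal (h t₀ ^ ((1:ℝ) / (N - 1))) +
      sigmaC K (N - 1) s (t₁ - t₀) * ENNReal.ofReal (h t₁ ^ ((1:ℝ) / (N - 1)))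
      ≤ ENNReal.ofReal (h ((1 - s) * t₀ + s * t₁) ^ ((1:ℝ) / (N - 1)))

/-- Membership in the synthetic model family `F^s_{K,N,D}`. -/
def memFs (K N D : ℝ) (μ : Measure ℝ) : Prop :=
  IsProbabilityMeasure μ ∧ μ (Icc (0:ℝ) D)ᶜ = 0 ∧
  ∃ h : ℝ → ℝ, (∀ x, 0 ≤ h x) ∧
    μ = volume.withDensity (fun x => ENNReal.ofReal (h x)) ∧
    (if N = 1 then ∀ x ∈ Function.support h, ∀ y ∈ Function.support h, h x = h y
     else Continuous h ∧ SynthCD K N h (Icc 0 D))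

/-- The model first eigenvalue `λ^{1,p}_{K,N,D}` of the `p`-Laplacian (smooth family). -/
def lamOnePModel (K N D p : ℝ) : ℝ :=
  sInf {r : ℝ | ∃ μ : Measure ℝ, memF K N D μ ∧ ∃ u : ℝ → ℝ, IsLip u ∧
    MemLp u (ENNReal.ofReal p) μ ∧ (∫ x, |u x| ^ p ∂μ) ≠ 0 ∧
    (∫ x, u x * |u x| ^ (p - 2) ∂μ) = 0 ∧
    r = (∫ x, slope u x ^ p ∂μ) / ∫ x, |u x| ^ p ∂μ}

/-- The synthetic model first eigenvalue `^sλ^{1,p}_{K,N,D}` of the `p`-Laplacian. -/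
def lamOnePModelS (K N D p : ℝ) : ℝ :=
  sInf {r : ℝ | ∃ μ : Measure ℝ, memFs K N D μ ∧ ∃ u : ℝ → ℝ, IsLip u ∧
    MemLp u (ENNReal.ofReal p) μ ∧ (∫ x, |u x| ^ p ∂μ) ≠ 0 ∧
    (∫ x, u x * |u x| ^ (p - 2) ∂μ) = 0 ∧
    r = (∫ x, slope u x ^ p ∂μ) / ∫ x, |u x| ^ p ∂μ}

/-- The model Log-Sobolev constant `α^{LS}_{K,N,D}`. -/
def logSobConst (K N D : ℝ) : ℝ :=
  sSup {α : ℝ | 0 < α ∧ ∀ μ : Measure ℝ, memFs K N D μ →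
    ∀ f : ℝ → ℝ, IsLip f → (∀ x, 0 ≤ f x) → (∫ x, f x ∂μ) = 1 →
      2 * α * ∫ x, f x * Real.log (f x) ∂μ ≤ ∫ x in {y | 0 < f y}, slope f x ^ 2 / f x ∂μ}

/-- The model `(p,q)`-Sobolev constant `α^{p,q}_{K,N,D}` (smooth family). -/
def sobolevConst (K N D p q : ℝ) : ℝ :=
  sSup {α : ℝ | 0 < α ∧ ∀ μ : Measure ℝ, memF K N D μ →
    ∀ f : ℝ → ℝ, IsLip f →
      α / (p - q) * ((∫ x, |f x| ^ p ∂μ) ^ (q / p) - ∫ x, |f x| ^ q ∂μ)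
        ≤ ∫ x, slope f x ^ q ∂μ}

/-- The synthetic model `(p,q)`-Sobolev constant `^sα^{p,q}_{K,N,D}`. -/
def sobolevConstS (K N D p q : ℝ) : ℝ :=
  sSup {α : ℝ | 0 < α ∧ ∀ μ : Measure ℝ, memFs K N D μ →
    ∀ f : ℝ → ℝ, IsLip f →
      α / (p - q) * ((∫ x, |f x| ^ p ∂μ) ^ (q / p) - ∫ x, |f x| ^ q ∂μ)
        ≤ ∫ x, slope f x ^ q ∂μ}

/-! ### Model Cheeger constant -/

/-- `s_δ`. -/
def sdelta (δ t : ℝ) : ℝ :=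
  if 0 < δ then Real.sin (Real.sqrt δ * t) / Real.sqrt δ
  else if δ = 0 then t
  else Real.sinh (Real.sqrt (-δ) * t) / Real.sqrt (-δ)

/-- `c_δ`. -/
def cdelta (δ t : ℝ) : ℝ :=
  if 0 < δ then Real.cos (Real.sqrt δ * t)
  else if δ = 0 then 1
  else Real.cosh (Real.sqrt (-δ) * t)

/-- The set `[ξ₋, ξ₊]` between the first non-positive and first positive roots of `f`. -/
def betweenRoots (f : ℝ → ℝ) : Set ℝ :=
  {t | (∀ s, 0 < s → s < t → f s ≠ 0) ∧ (∀ s, t < s → s ≤ 0 → f s ≠ 0)}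

/-- `f₊ = f · χ_{[ξ₋, ξ₊]}`. -/
def fplus (f : ℝ → ℝ) : ℝ → ℝ := (betweenRoots f).indicator f

/-- The model density `J_{H,K,N}`. -/
def Jfun (H K N : ℝ) (t : ℝ) : ℝ :=
  if N = 1 then
    (if 0 < K then (if t = 0 then 1 else 0) else (if 0 ≤ H * t then 1 else 0))
  else
    fplus (fun s => cdelta (K / (N - 1)) s + H / (N - 1) * sdelta (K / (N - 1)) s) t
      ^ (N - 1)

/-- The probability measure `μ_{f,L}` on `L ⊆ ℝ` with density proportional to `f`. -/
def probOfDensity (f : ℝ → ℝ) (L : Set ℝ) : Measure ℝ :=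
  (∫⁻ x in L, ENNReal.ofReal (f x))⁻¹ •
    (volume.restrict L).withDensity fun x => ENNReal.ofReal (f x)

/-- The interval `[-a, D-a]` (allowing `D = ∞`). -/
def modelInterval (a : ℝ) (D : ℝ≥0∞) : Set ℝ :=
  {x | -a ≤ x ∧ ENNReal.ofReal (x + a) ≤ D}

/-- The model Cheeger constant `h_{K,N,D}`, `D ∈ (0,∞]`. -/
def cheegerModel (K N : ℝ) (D : ℝ≥0∞) : ℝ :=
  sInf {r : ℝ | ∃ H a : ℝ, 0 ≤ a ∧ ENNReal.ofReal a ≤ D ∧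
    r = cheegerConst (probOfDensity (Jfun H K N) (modelInterval a D))}

/-!
Write `g = h^{1/(N-1)}`. If `g(t₀), g(t₁) > 0`, the weak concavity inequality and
`σ^{(1-s)} > 0` for `s < 1` force `g > 0` in between. On an interval of length `Θ` with
`K Θ² < (N-1) π²` the coefficients satisfy `σ^{(s)}(θ) ≥ s / cosh A` and
`σ^{(s)}(θ) ≥ 1 - cosh A · (1 - s)`, where `A = Θ √(|K|/(N-1))` (concavity of `sin` if `K ≥ 0`,
the mean value theorem for `sinh` if `K < 0`). The first bound makes `g` concave up to the
factor `1 / cosh A`, which bounds it above and below by positive constants on a smaller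
interval; the second bounds its difference quotients towards a point at distance `d` by
`cosh A · sup g / d`. So `g`, and with it `h = g^{N-1}`, is Lipschitz there.
-/

open Real

def sigmaReal (K N s θ : ℝ) : ℝ :=
  if 0 < K then sin (s * θ * √(K / N)) / sin (θ * √(K / N))
  else if K = 0 then s
  else sinh (s * θ * √(-K / N)) / sinh (θ * √(-K / N))

theorem sigmaC_eq_ofReal_sigmaReal {K N θ : ℝ} (hN : 0 < N) (hθ : 0 < θ)
    (hfin : K * θ ^ 2 < N * π ^ 2) (s : ℝ) :
    sigmaC K N s θ = ENNReal.ofReal (sigmaReal K N s θ) := by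
  have hθ2 := pow_pos hθ 2
  rw [sigmaC, sigmaReal, if_neg (not_le.mpr hfin)]
  rcases lt_trichotomy K 0 with hK | rfl | hK
  · rw [if_neg (by nlinarith), if_neg (by nlinarith), if_neg hN.ne', if_pos hN,
      if_neg hK.not_gt, if_neg hK.ne]
  · simp
  · rw [if_pos (by positivity), if_pos hK]

theorem mul_sq_lt_of_le {K N θ Θ : ℝ} (hN : 0 < N) (hθ : 0 ≤ θ) (hθΘ : θ ≤ Θ)
    (hΘ : K * Θ ^ 2 < N * π ^ 2) : K * θ ^ 2 < N * π ^ 2 := by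
  rcases le_or_gt K 0 with hK | hK
  · nlinarith [mul_pos hN (pow_pos Real.pi_pos 2), mul_nonpos_of_nonpos_of_nonneg hK (sq_nonneg θ)]
  · nlinarith [mul_le_mul_of_nonneg_left (pow_le_pow_left₀ hθ hθΘ 2) hK.le]

theorem mul_sin_le_sin_mul {s α : ℝ} (hs : s ∈ Icc (0 : ℝ) 1) (hα : α ∈ Icc 0 π) :
    s * sin α ≤ sin (s * α) := by
  have := strictConcaveOn_sin_Icc.concaveOn.2 ⟨le_rfl, Real.pi_pos.le⟩ hα (sub_nonneg.2 hs.2) hs.1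
    (sub_add_cancel 1 s)
  simpa using this

theorem sinh_sub_sinh_le_cosh_mul {x y : ℝ} (hx : 0 ≤ x) (hxy : x ≤ y) :
    sinh y - sinh x ≤ cosh y * (y - x) := by
  refine (convex_Icc x y).image_sub_le_mul_sub_of_deriv_le continuous_sinh.continuousOn
    differentiable_sinh.differentiableOn (fun z hz => ?_) x ⟨le_rfl, hxy⟩ y ⟨hxy, le_rfl⟩ hxy
  rw [interior_Icc] at hz
  rw [Real.deriv_sinh, cosh_le_cosh, abs_of_pos (hx.trans_lt hz.1), abs_of_nonneg (hx.trans hxy)]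
  exact hz.2.le

theorem le_sigmaReal_of_nonneg {K N s θ : ℝ} (hK : 0 ≤ K) (hN : 0 < N) (hθ : 0 < θ)
    (hfin : K * θ ^ 2 < N * π ^ 2) (hs : s ∈ Icc (0 : ℝ) 1) : s ≤ sigmaReal K N s θ := by
  rw [sigmaReal]
  rcases hK.lt_or_eq with hK | rfl
  · rw [if_pos hK]
    set α := θ * √(K / N)
    have hα : 0 < α := by positivity
    have hαπ : α < π := by
      have : α ^ 2 < π ^ 2 := by
        rw [mul_pow, sq_sqrt (by positivity), mul_div_assoc', div_lt_iff₀ hN]; linarith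
      exact lt_of_pow_lt_pow_left₀ 2 Real.pi_pos.le this
    rw [mul_assoc, le_div_iff₀ (sin_pos_of_pos_of_lt_pi hα hαπ)]
    exact mul_sin_le_sin_mul hs ⟨hα.le, hαπ.le⟩
  · simp

section NegativeCurvature

variable {K N s θ Θ : ℝ}

theorem inv_cosh_mul_le_sigmaReal_of_neg (hK : K < 0) (hN : 0 < N) (hθ : 0 < θ) (hθΘ : θ ≤ Θ)
    (hs : s ∈ Icc (0 : ℝ) 1) : (cosh (Θ * √(|K| / N)))⁻¹ * s ≤ sigmaReal K N s θ := by
  rw [sigmaReal, if_neg hK.not_gt, if_neg hK.ne, abs_of_neg hK, mul_assoc]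
  set α := θ * √(-K / N)
  have hα : 0 < α := mul_pos hθ (sqrt_pos.2 (div_pos (neg_pos.2 hK) hN))
  have hαA : cosh α ≤ cosh (Θ * √(-K / N)) := by
    rw [cosh_le_cosh, abs_of_pos hα, abs_of_nonneg (mul_nonneg (hθ.le.trans hθΘ) (sqrt_nonneg _))]
    exact mul_le_mul_of_nonneg_right hθΘ (sqrt_nonneg _)
  have hsinh : sinh α ≤ cosh α * α := by simpa using sinh_sub_sinh_le_cosh_mul le_rfl hα.le
  rw [inv_mul_eq_div, div_le_div_iff₀ (cosh_pos _) (sinh_pos_iff.2 hα)]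
  calc s * sinh α ≤ s * (cosh α * α) := mul_le_mul_of_nonneg_left hsinh hs.1
    _ ≤ s * α * cosh (Θ * √(-K / N)) := by
        nlinarith [mul_le_mul_of_nonneg_left (mul_le_mul_of_nonneg_right hαA hα.le) hs.1]
    _ ≤ sinh (s * α) * cosh (Θ * √(-K / N)) := by
        gcongr
        exact self_le_sinh_iff.2 (mul_nonneg hs.1 hα.le)

theorem one_sub_cosh_mul_le_sigmaReal_of_neg (hK : K < 0) (hN : 0 < N) (hθ : 0 < θ)
    (hθΘ : θ ≤ Θ) (hs : s ∈ Icc (0 : ℝ) 1) :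
    1 - cosh (Θ * √(|K| / N)) * (1 - s) ≤ sigmaReal K N s θ := by
  rw [sigmaReal, if_neg hK.not_gt, if_neg hK.ne, abs_of_neg hK, mul_assoc]
  set α := θ * √(-K / N)
  have hα : 0 < α := mul_pos hθ (sqrt_pos.2 (div_pos (neg_pos.2 hK) hN))
  have hαA : cosh α ≤ cosh (Θ * √(-K / N)) := by
    rw [cosh_le_cosh, abs_of_pos hα, abs_of_nonneg (mul_nonneg (hθ.le.trans hθΘ) (sqrt_nonneg _))]
    exact mul_le_mul_of_nonneg_right hθΘ (sqrt_nonneg _)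
  have hmvt : sinh α - sinh (s * α) ≤ cosh α * ((1 - s) * α) := by
    have := sinh_sub_sinh_le_cosh_mul (mul_nonneg hs.1 hα.le)
      (mul_le_of_le_one_left hα.le hs.2)
    linarith [show α - s * α = (1 - s) * α by ring]
  have hcoef : cosh α * ((1 - s) * α) ≤ cosh (Θ * √(-K / N)) * (1 - s) * sinh α := by
    rw [← mul_assoc]
    gcongr
    · exact mul_nonneg (cosh_pos _).le (sub_nonneg.2 hs.2)
    · exact sub_nonneg.2 hs.2
    · exact self_le_sinh_iff.2 hα.le
  rw [le_div_iff₀ (sinh_pos_iff.2 hα)]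
  linarith

end NegativeCurvature

def HasDistortionBounds (c : ℝ → ℝ → ℝ) (Θ lam C : ℝ) : Prop :=
  ∀ θ ∈ Ioc 0 Θ, ∀ s ∈ Icc (0 : ℝ) 1, lam * s ≤ c s θ ∧ 1 - C * (1 - s) ≤ c s θ

theorem HasDistortionBounds.nonneg {c : ℝ → ℝ → ℝ} {Θ lam C θ s : ℝ}
    (hb : HasDistortionBounds c Θ lam C) (hlam : 0 ≤ lam) (hθ : θ ∈ Ioc 0 Θ)
    (hs : s ∈ Icc (0 : ℝ) 1) : 0 ≤ c s θ :=
  (mul_nonneg hlam hs.1).trans (hb θ hθ s hs).1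

theorem hasDistortionBounds_sigmaReal {K N Θ : ℝ} (hN : 0 < N) (hΘ : K * Θ ^ 2 < N * π ^ 2) :
    HasDistortionBounds (sigmaReal K N) Θ (cosh (Θ * √(|K| / N)))⁻¹ (cosh (Θ * √(|K| / N))) := by
  intro θ hθ s hs
  rcases le_or_gt 0 K with hK | hK
  · have hσ := le_sigmaReal_of_nonneg hK hN hθ.1 (mul_sq_lt_of_le hN hθ.1.le hθ.2 hΘ) hs
    have hc := one_le_cosh (Θ * √(|K| / N))
    constructor
    · exact (mul_le_of_le_one_left hs.1 (inv_le_one_of_one_le₀ hc)).trans hσ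
    · nlinarith [mul_le_mul_of_nonneg_right hc (sub_nonneg.2 hs.2)]
  · exact ⟨inv_cosh_mul_le_sigmaReal_of_neg hK hN hθ.1 hθ.2 hs,
      one_sub_cosh_mul_le_sigmaReal_of_neg hK hN hθ.1 hθ.2 hs⟩

theorem sigmaC_ne_zero {K N s θ : ℝ} (hN : 0 < N) (hθ : 0 < θ) (hs : s ∈ Ioc (0 : ℝ) 1) :
    sigmaC K N s θ ≠ 0 := by
  rcases le_or_gt (N * π ^ 2) (K * θ ^ 2) with hfin | hfin
  · simp [sigmaC, hfin]
  · rw [sigmaC_eq_ofReal_sigmaReal hN hθ hfin, ne_eq, ENNReal.ofReal_eq_zero, not_le]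
    exact lt_of_lt_of_le (by have := hs.1; positivity)
      (hasDistortionBounds_sigmaReal hN hfin θ ⟨hθ, le_rfl⟩ s (Ioc_subset_Icc_self hs)).1

theorem SynthCD.convex_setOf_pos {K N : ℝ} {h : ℝ → ℝ} {I : Set ℝ} (hconc : SynthCD K N h I)
    (hN : 1 < N) (hI : Convex ℝ I) (hpos : ∀ t ∈ I, 0 ≤ h t) :
    Convex ℝ {t ∈ I | 0 < h t} := by
  refine convex_iff_ordConnected.2 ⟨fun p hp q hq t ht => ?_⟩
  have htI : t ∈ I := hI.ordConnected.out hp.1 hq.1 ht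
  refine ⟨htI, ?_⟩
  rcases ht.2.eq_or_lt with rfl | htq
  · exact hq.2
  have hpq : 0 < q - p := sub_pos.2 (ht.1.trans_lt htq)
  have key := hconc p hp.1 q hq.1 (sub_pos.1 hpq) ((t - p) / (q - p))
    ⟨div_nonneg (sub_nonneg.2 ht.1) hpq.le, div_le_one_of_le₀ (by linarith [ht.2]) hpq.le⟩
  rw [show (1 - (t - p) / (q - p)) * p + (t - p) / (q - p) * q = t by field_simp; ring] at key
  have hσ : sigmaC K (N - 1) (1 - (t - p) / (q - p)) (q - p) ≠ 0 := by
    refine sigmaC_ne_zero (by linarith) hpq ⟨?_, ?_⟩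
    · rw [sub_pos, div_lt_one hpq]; linarith
    · linarith [div_nonneg (sub_nonneg.2 ht.1) hpq.le]
  have hgp := ENNReal.ofReal_pos.2 (rpow_pos_of_pos hp.2 (1 / (N - 1)))
  have hgt : 0 < h t ^ (1 / (N - 1)) :=
    ENNReal.ofReal_pos.1 ((ENNReal.mul_pos hσ hgp.ne').trans_le (le_self_add.trans key))
  refine (hpos t htI).lt_of_ne' fun h0 => ?_
  rw [h0, Real.zero_rpow (one_div_ne_zero (sub_pos.2 hN).ne')] at hgt
  exact hgt.false

def DistortionConcaveOn (c : ℝ → ℝ → ℝ) (g : ℝ → ℝ) (S : Set ℝ) : Prop :=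
  ∀ t₀ ∈ S, ∀ t₁ ∈ S, t₀ < t₁ → ∀ s ∈ Icc (0 : ℝ) 1,
    c (1 - s) (t₁ - t₀) * g t₀ + c s (t₁ - t₀) * g t₁ ≤ g ((1 - s) * t₀ + s * t₁)

theorem SynthCD.distortionConcaveOn_rpow {K N : ℝ} {h : ℝ → ℝ} {S : Set ℝ}
    (hconc : SynthCD K N h S) (hN : 1 < N) (hS : Convex ℝ S) (hpos : ∀ t ∈ S, 0 ≤ h t)
    (hfin : ∀ t₀ ∈ S, ∀ t₁ ∈ S, t₀ < t₁ → K * (t₁ - t₀) ^ 2 < (N - 1) * π ^ 2) :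
    DistortionConcaveOn (sigmaReal K (N - 1)) (fun t => h t ^ (1 / (N - 1))) S := by
  intro t₀ ht₀ t₁ ht₁ hlt s hs
  have hN' : 0 < N - 1 := sub_pos.2 hN
  have hθ : 0 < t₁ - t₀ := sub_pos.2 hlt
  have hb := hasDistortionBounds_sigmaReal hN' (hfin t₀ ht₀ t₁ ht₁ hlt)
  have hc₀ := hb.nonneg (inv_nonneg.2 (cosh_pos _).le) ⟨hθ, le_rfl⟩
    ⟨sub_nonneg.2 hs.2, sub_le_self 1 hs.1⟩
  have hc₁ := hb.nonneg (inv_nonneg.2 (cosh_pos _).le) ⟨hθ, le_rfl⟩ hs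
  have hmid : (1 - s) * t₀ + s * t₁ ∈ S := by
    simpa using hS ht₀ ht₁ (sub_nonneg.2 hs.2) hs.1 (sub_add_cancel 1 s)
  have key := hconc t₀ ht₀ t₁ ht₁ hlt s hs
  simp only [sigmaC_eq_ofReal_sigmaReal hN' hθ (hfin t₀ ht₀ t₁ ht₁ hlt)] at key
  rwa [← ENNReal.ofReal_mul hc₀, ← ENNReal.ofReal_mul hc₁,
    ← ENNReal.ofReal_add (mul_nonneg hc₀ (rpow_nonneg (hpos t₀ ht₀) _))
      (mul_nonneg hc₁ (rpow_nonneg (hpos t₁ ht₁) _)),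
    ENNReal.ofReal_le_ofReal_iff (rpow_nonneg (hpos _ hmid) _)] at key

namespace DistortionConcaveOn

variable {c : ℝ → ℝ → ℝ} {g : ℝ → ℝ} {S : Set ℝ} {a b lam C t t₀ t₁ : ℝ}

theorem le_of_mem_Icc (hg : DistortionConcaveOn c g S) (ht₀ : t₀ ∈ S) (ht₁ : t₁ ∈ S)
    (hlt : t₀ < t₁) (ht : t ∈ Icc t₀ t₁) :
    c ((t₁ - t) / (t₁ - t₀)) (t₁ - t₀) * g t₀ + c ((t - t₀) / (t₁ - t₀)) (t₁ - t₀) * g t₁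
      ≤ g t := by
  have hθ : 0 < t₁ - t₀ := sub_pos.2 hlt
  have key := hg t₀ ht₀ t₁ ht₁ hlt ((t - t₀) / (t₁ - t₀))
    ⟨div_nonneg (sub_nonneg.2 ht.1) hθ.le, div_le_one_of_le₀ (by linarith [ht.2]) hθ.le⟩
  rwa [show (1 - (t - t₀) / (t₁ - t₀)) * t₀ + (t - t₀) / (t₁ - t₀) * t₁ = t by
      field_simp; ring,
    show 1 - (t - t₀) / (t₁ - t₀) = (t₁ - t) / (t₁ - t₀) by field_simp; ring] at key

theorem le_of_hasDistortionBounds (hg : DistortionConcaveOn c g (Icc a b))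
    (hb : HasDistortionBounds c (b - a) lam C) (hlam : 0 ≤ lam) (hg0 : ∀ t ∈ Icc a b, 0 ≤ g t)
    (ht₀ : t₀ ∈ Icc a b) (ht₁ : t₁ ∈ Icc a b) (hlt : t₀ < t₁) (ht : t ∈ Icc t₀ t₁) :
    lam * ((t₁ - t) * g t₀ + (t - t₀) * g t₁) ≤ (t₁ - t₀) * g t ∧
      (t₁ - t₀ - C * (t - t₀)) * g t₀ ≤ (t₁ - t₀) * g t ∧
      (t₁ - t₀ - C * (t₁ - t)) * g t₁ ≤ (t₁ - t₀) * g t := by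
  have hθ : 0 < t₁ - t₀ := sub_pos.2 hlt
  have hθ' : t₁ - t₀ ∈ Ioc 0 (b - a) := ⟨hθ, by linarith [ht₀.1, ht₁.2]⟩
  have key := hg.le_of_mem_Icc ht₀ ht₁ hlt ht
  set s₀ := (t₁ - t) / (t₁ - t₀)
  set s₁ := (t - t₀) / (t₁ - t₀)
  have hs₀ : s₀ ∈ Icc (0 : ℝ) 1 :=
    ⟨div_nonneg (sub_nonneg.2 ht.2) hθ.le, div_le_one_of_le₀ (by linarith [ht.1]) hθ.le⟩
  have hs₁ : s₁ ∈ Icc (0 : ℝ) 1 :=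
    ⟨div_nonneg (sub_nonneg.2 ht.1) hθ.le, div_le_one_of_le₀ (by linarith [ht.2]) hθ.le⟩
  have hsum : s₀ + s₁ = 1 := by simp only [s₀, s₁]; field_simp; ring
  have e₀ : (t₁ - t₀) * s₀ = t₁ - t := by simp only [s₀]; field_simp
  have e₁ : (t₁ - t₀) * s₁ = t - t₀ := by simp only [s₁]; field_simp
  obtain ⟨l₀, c₀⟩ := hb _ hθ' s₀ hs₀
  obtain ⟨l₁, c₁⟩ := hb _ hθ' s₁ hs₁
  have n₀ := mul_nonneg (hb.nonneg hlam hθ' hs₀) (hg0 t₀ ht₀)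
  have n₁ := mul_nonneg (hb.nonneg hlam hθ' hs₁) (hg0 t₁ ht₁)
  have f₀ := mul_le_mul_of_nonneg_right l₀ (hg0 t₀ ht₀)
  have f₁ := mul_le_mul_of_nonneg_right l₁ (hg0 t₁ ht₁)
  have f₂ := mul_le_mul_of_nonneg_right c₀ (hg0 t₀ ht₀)
  have f₃ := mul_le_mul_of_nonneg_right c₁ (hg0 t₁ ht₁)
  refine ⟨?_, ?_, ?_⟩
  · rw [← e₀, ← e₁]
    nlinarith [mul_le_mul_of_nonneg_left (show lam * s₀ * g t₀ + lam * s₁ * g t₁ ≤ g t by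
      linarith) hθ.le]
  · rw [← e₁, show s₁ = 1 - s₀ by linarith]
    nlinarith [mul_le_mul_of_nonneg_left (show (1 - C * (1 - s₀)) * g t₀ ≤ g t by
      linarith) hθ.le]
  · rw [← e₀, show s₀ = 1 - s₁ by linarith]
    nlinarith [mul_le_mul_of_nonneg_left (show (1 - C * (1 - s₁)) * g t₁ ≤ g t by
      linarith) hθ.le]

theorem mul_min_le_apply (hg : DistortionConcaveOn c g (Icc a b))
    (hb : HasDistortionBounds c (b - a) lam C) (hlam : 0 ≤ lam) (hg0 : ∀ t ∈ Icc a b, 0 ≤ g t)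
    (hab : a < b) {t : ℝ} (ht : t ∈ Icc a b) : lam * min (g a) (g b) ≤ g t := by
  have ha : a ∈ Icc a b := left_mem_Icc.2 hab.le
  have hb' : b ∈ Icc a b := right_mem_Icc.2 hab.le
  have hA := (hg.le_of_hasDistortionBounds hb hlam hg0 ha hb' hab ht).1
  have hmin : (b - t) * min (g a) (g b) + (t - a) * min (g a) (g b)
      ≤ (b - t) * g a + (t - a) * g b :=
    add_le_add (mul_le_mul_of_nonneg_left (min_le_left _ _) (sub_nonneg.2 ht.2))
      (mul_le_mul_of_nonneg_left (min_le_right _ _) (sub_nonneg.2 ht.1))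
  refine le_of_mul_le_mul_left ?_ (sub_pos.2 hab)
  nlinarith [mul_le_mul_of_nonneg_left hmin hlam]

theorem apply_le_mul_apply (hg : DistortionConcaveOn c g (Icc a b))
    (hb : HasDistortionBounds c (b - a) lam C) (hlam : 0 < lam) (hg0 : ∀ t ∈ Icc a b, 0 ≤ g t)
    {p t : ℝ} (hap : a < p) (ht : t ∈ Icc p b) : g t ≤ (b - a) / (lam * (p - a)) * g p := by
  have ha : a ∈ Icc a b := left_mem_Icc.2 (hap.le.trans (ht.1.trans ht.2))
  have htab : t ∈ Icc a b := ⟨hap.le.trans ht.1, ht.2⟩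
  have hA := (hg.le_of_hasDistortionBounds hb hlam.le hg0 ha htab (hap.trans_le ht.1)
    ⟨hap.le, ht.1⟩).1
  have hgp := hg0 p ⟨hap.le, ht.1.trans ht.2⟩
  rw [div_mul_eq_mul_div, le_div_iff₀ (mul_pos hlam (sub_pos.2 hap))]
  nlinarith [mul_nonneg (mul_nonneg hlam.le (sub_nonneg.2 ht.1)) (hg0 a ha),
    mul_le_mul_of_nonneg_right (show t - a ≤ b - a by linarith [ht.2]) hgp]

theorem mul_abs_sub_le (hg : DistortionConcaveOn c g (Icc a b))
    (hb : HasDistortionBounds c (b - a) lam C) (hlam : 0 ≤ lam) (hC : 0 ≤ C)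
    (hg0 : ∀ t ∈ Icc a b, 0 ≤ g t) {d M : ℝ} (hd : 0 < d)
    (hM : ∀ t ∈ Icc (a + d) (b - d), g t ≤ M) {u v : ℝ} (hu : u ∈ Icc (a + d) (b - d))
    (hv : v ∈ Icc (a + d) (b - d)) : d * |g u - g v| ≤ C * M * |u - v| := by
  wlog huv : u < v generalizing u v
  · rcases (not_lt.1 huv).eq_or_lt with rfl | hvu
    · simp
    · rw [abs_sub_comm, abs_sub_comm u]; exact this hv hu hvu
  have mem : ∀ {t}, t ∈ Icc (a + d) (b - d) → t ∈ Icc a b := fun ht =>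
    ⟨by linarith [ht.1], by linarith [ht.2]⟩
  have hab : a ∈ Icc a b := left_mem_Icc.2 (by linarith [hu.1, hu.2])
  have hbb : b ∈ Icc a b := right_mem_Icc.2 (by linarith [hu.1, hu.2])
  have hleft := (hg.le_of_hasDistortionBounds hb hlam hg0 (mem hu) hbb
    (by linarith [hu.2]) ⟨huv.le, by linarith [hv.2]⟩).2.1
  have hright := (hg.le_of_hasDistortionBounds hb hlam hg0 hab (mem hv)
    (by linarith [hv.1]) ⟨by linarith [hu.1], huv.le⟩).2.2
  have hCu := mul_le_mul_of_nonneg_left (hM u hu) (mul_nonneg hC (sub_nonneg.2 huv.le))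
  have hCv := mul_le_mul_of_nonneg_left (hM v hv) (mul_nonneg hC (sub_nonneg.2 huv.le))
  have hRHS : 0 ≤ C * M * (v - u) :=
    mul_nonneg (mul_nonneg hC ((hg0 u (mem hu)).trans (hM u hu))) (sub_nonneg.2 huv.le)
  rw [abs_sub_comm u, abs_of_pos (sub_pos.2 huv), ← abs_of_pos hd, ← abs_mul, abs_le]
  constructor
  · rcases le_total (g u) (g v) with h | h
    · nlinarith [mul_le_mul_of_nonneg_right (show d ≤ v - a by linarith [hu.1]) (sub_nonneg.2 h)]
    · nlinarith [mul_nonneg hd.le (sub_nonneg.2 h)]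
  · rcases le_total (g u) (g v) with h | h
    · nlinarith [mul_nonneg hd.le (sub_nonneg.2 h)]
    · nlinarith [mul_le_mul_of_nonneg_right (show d ≤ b - u by linarith [hv.2]) (sub_nonneg.2 h)]

theorem exists_lipschitzOnWith {x r : ℝ}
    (hg : DistortionConcaveOn c g (closedBall x (2 * r)))
    (hb : HasDistortionBounds c (4 * r) lam C) (hlam : 0 < lam) (hC : 0 ≤ C) (hr : 0 < r)
    (hpos : ∀ t ∈ closedBall x (2 * r), 0 < g t) :
    ∃ δ > 0, ∃ M, ∃ L, MapsTo g (closedBall x r) (Icc δ M) ∧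
      LipschitzOnWith L g (closedBall x r) := by
  rw [closedBall_eq_Icc] at hg hpos
  have hb' : HasDistortionBounds c (x + 2 * r - (x - 2 * r)) lam C := by
    rwa [show x + 2 * r - (x - 2 * r) = 4 * r by ring]
  have hg0 t ht := (hpos t ht).le
  have hinner : closedBall x r = Icc (x - 2 * r + r) (x + 2 * r - r) := by
    rw [closedBall_eq_Icc]; ring_nf
  set M := (x + 2 * r - (x - 2 * r)) / (lam * (x - r - (x - 2 * r))) * g (x - r)
  have hM : ∀ t ∈ Icc (x - 2 * r + r) (x + 2 * r - r), g t ≤ M := fun t ht =>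
    hg.apply_le_mul_apply hb' hlam hg0 (by linarith) ⟨by linarith [ht.1], by linarith [ht.2]⟩
  refine ⟨lam * min (g (x - 2 * r)) (g (x + 2 * r)),
    mul_pos hlam (lt_min (hpos _ ⟨le_rfl, by linarith⟩) (hpos _ ⟨by linarith, le_rfl⟩)), M,
    Real.toNNReal (C * M / r), fun t ht => ⟨?_, ?_⟩, LipschitzOnWith.of_dist_le_mul ?_⟩
  · rw [hinner] at ht
    exact hg.mul_min_le_apply hb' hlam.le hg0 (by linarith) ⟨by linarith [ht.1], by linarith [ht.2]⟩
  · rw [hinner] at ht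
    exact hM t ht
  · intro u hu v hv
    rw [hinner] at hu hv
    have hCM : 0 ≤ C * M := mul_nonneg hC ((hg0 u ⟨by linarith [hu.1], by linarith [hu.2]⟩).trans
      (hM u hu))
    rw [Real.dist_eq, Real.dist_eq, Real.coe_toNNReal _ (div_nonneg hCM hr.le),
      div_mul_eq_mul_div, le_div_iff₀ hr, mul_comm]
    exact hg.mul_abs_sub_le hb' hlam.le hC hg0 hr hM hu hv

end DistortionConcaveOn

theorem LipschitzOnWith.exists_lipschitzOnWith_rpow {α : Type*} [PseudoEMetricSpace α]
    {f : α → ℝ} {s : Set α} {L : ℝ≥0} {δ M : ℝ} (hf : LipschitzOnWith L f s) (hδ : 0 < δ)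
    (hfs : MapsTo f s (Icc δ M)) (p : ℝ) : ∃ L', LipschitzOnWith L' (fun x => f x ^ p) s := by
  have hrpow : ContDiffOn ℝ 1 (fun y : ℝ => y ^ p) (Icc δ M) := fun y hy =>
    (contDiffAt_rpow_const_of_ne (hδ.trans_le hy.1).ne').contDiffWithinAt
  obtain ⟨K, hK⟩ := hrpow.exists_lipschitzOnWith one_ne_zero (convex_Icc δ M) isCompact_Icc
  exact ⟨K * L, hK.comp hf hfs⟩

theorem exists_pos_mul_sq_lt_and_closedBall_subset {x K c : ℝ} {U : Set ℝ} (hU : U ∈ 𝓝 x)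
    (hc : 0 < c) : ∃ r > 0, K * (4 * r) ^ 2 < c ∧ closedBall x (2 * r) ⊆ U := by
  have hK : ∀ᶠ r in 𝓝 (0 : ℝ), K * (4 * r) ^ 2 < c :=
    (by fun_prop : Continuous fun r : ℝ => K * (4 * r) ^ 2).tendsto' 0 0 (by simp)
      |>.eventually (gt_mem_nhds hc)
  have hB : ∀ᶠ r in 𝓝 (0 : ℝ), closedBall x (2 * r) ⊆ U :=
    (by fun_prop : Continuous fun r : ℝ => 2 * r).tendsto' 0 0 (by simp)
      |>.eventually (eventually_closedBall_subset hU)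
  have hpos : ∀ᶠ r in 𝓝[>] (0 : ℝ), 0 < r := self_mem_nhdsWithin
  obtain ⟨r, hr, hrU⟩ := (hpos.and ((hK.and hB).filter_mono nhdsWithin_le_nhds)).exists
  exact ⟨r, hr, hrU⟩

theorem SynthCD.exists_lipschitzOnWith_closedBall {K N x r : ℝ} {h : ℝ → ℝ}
    (hconc : SynthCD K N h (closedBall x (2 * r))) (hN : 1 < N) (hr : 0 < r)
    (hKr : K * (4 * r) ^ 2 < (N - 1) * π ^ 2) (hpos : ∀ t ∈ closedBall x (2 * r), 0 < h t) :
    ∃ L, LipschitzOnWith L h (closedBall x r) := by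
  have hN' : 0 < N - 1 := sub_pos.2 hN
  have hg := hconc.distortionConcaveOn_rpow hN (convex_closedBall x _) (fun t ht => (hpos t ht).le)
    fun t₀ ht₀ t₁ ht₁ hlt => by
      rw [closedBall_eq_Icc] at ht₀ ht₁
      exact mul_sq_lt_of_le hN' (sub_pos.2 hlt).le (by linarith [ht₀.1, ht₁.2]) hKr
  obtain ⟨δ, hδ, M, L, hmaps, hL⟩ := hg.exists_lipschitzOnWith
    (hasDistortionBounds_sigmaReal hN' hKr) (inv_pos.2 (cosh_pos _)) (cosh_pos _).le hr
    fun t ht => rpow_pos_of_pos (hpos t ht) _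
  obtain ⟨L', hL'⟩ := LipschitzOnWith.exists_lipschitzOnWith_rpow hL hδ hmaps (N - 1)
  have hrpow : ∀ t ∈ closedBall x r, (h t ^ (1 / (N - 1))) ^ (N - 1) = h t := fun t ht => by
    rw [← rpow_mul (hpos t (closedBall_subset_closedBall (by linarith) ht)).le, one_div,
      inv_mul_cancel₀ hN'.ne', Real.rpow_one]
  refine ⟨L', fun u hu v hv => ?_⟩
  rw [← hrpow u hu, ← hrpow v hv]
  exact hL' hu hv

/-- Regularity of weakly `(K,N)`-concave densities: the positivity set is convex and the
density is locally Lipschitz on its interior. -/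
theorem weak_concavity_regularity (K N : ℝ) (hN : 1 < N) (I : Set ℝ) (hI : Convex ℝ I)
    (h : ℝ → ℝ) (hpos : ∀ t ∈ I, 0 ≤ h t) (hconc : SynthCD K N h I) :
    Convex ℝ {t ∈ I | 0 < h t} ∧
    ∀ x ∈ interior {t ∈ I | 0 < h t}, ∃ ε > 0, ∃ C : ℝ≥0,
      LipschitzOnWith C h (Metric.ball x ε ∩ interior {t ∈ I | 0 < h t}) := by
  refine ⟨hconc.convex_setOf_pos hN hI hpos, fun x hx => ?_⟩
  obtain ⟨r, hr, hKr, hball⟩ := exists_pos_mul_sq_lt_and_closedBall_subset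
    (mem_interior_iff_mem_nhds.1 hx) (by have := sub_pos.2 hN; positivity : 0 < (N - 1) * π ^ 2)
  have hsub : closedBall x (2 * r) ⊆ I := fun t ht => (hball ht).1
  obtain ⟨L, hL⟩ := SynthCD.exists_lipschitzOnWith_closedBall
    (fun t₀ ht₀ t₁ ht₁ => hconc t₀ (hsub ht₀) t₁ (hsub ht₁)) hN hr hKr fun t ht => (hball ht).2
  exact ⟨r, hr, L, hL.mono (inter_subset_left.trans ball_subset_closedBall)⟩

end CDMMS
end
end

section
/- Let K ∈ ℝ, N ∈ (1,∞), D > 0 and let h ∈ C²((0,D)) with h > 0 on (0,D). Then h satisfies, for all 0 < t₀ < t₁ < D and all s ∈ [0,1], the weak (K,N)-concavity inequality h((1−s)t₀ + s t₁)^{1/(N−1)} ≥ σ_{K,N−1}^{(1−s)}(t₁−t₀)·h(t₀)^{1/(N−1)} + σ_{K,N−1}^{(s)}(t₁−t₀)·h(t₁)^{1/(N−1)} if and only if the differential inequality (h^{1/(N−1)})'' + (K/(N−1))·h^{1/(N−1)} ≤ 0 holds on (0,D). -/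
noncomputable section

open MeasureTheory Set Filter Metric Topology ENNReal NNReal

namespace CDMMS

variable {X : Type*} [MetricSpace X]

variable [MeasurableSpace X]

/-!
Write `g = h ^ (1 / (N - 1))` and `δ = K / (N - 1)`. In terms of the generalized sine `sdelta δ`,
the solution of `u'' + δ u = 0` with `u 0 = 0`, `u' 0 = 1`, the distortion coefficient is
`σ^{(s)}(θ) = sdelta δ (s θ) / sdelta δ θ`, so the concavity inequality on `[t₀, t₁]` says that `g`
lies above the solution of `u'' + δ u = 0` with the boundary values of `g`.

If `g'' + δ g ≤ 0`, a Sturm comparison with a sine shows that the positivity of `g` forces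
`δ (t₁ - t₀)² < π²`, so that `σ` is finite, and a maximum principle (monotonicity of the
Wronskian against a positive solution) puts `g` above that solution. Conversely, the midpoint
case `s = 1/2` on `[t - ε, t + ε]` reads `g (t + ε) + g (t - ε) ≤ 2 cdelta δ ε · g t`; dividing
by `ε²` and letting `ε → 0` gives `g'' t ≤ -δ g t`.
-/

open Real

section GeneralizedSine

variable {δ : ℝ}

theorem sdelta_zero (δ : ℝ) : sdelta δ 0 = 0 := by
  unfold sdelta; split_ifs <;> simp

theorem cdelta_zero (δ : ℝ) : cdelta δ 0 = 1 := by
  unfold cdelta; split_ifs <;> simp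

theorem cdelta_neg (δ x : ℝ) : cdelta δ (-x) = cdelta δ x := by
  unfold cdelta; split_ifs <;> simp

theorem sdelta_two_mul (δ x : ℝ) : sdelta δ (2 * x) = 2 * sdelta δ x * cdelta δ x := by
  unfold sdelta cdelta
  split_ifs
  · rw [mul_left_comm, sin_two_mul]; ring
  · ring
  · rw [mul_left_comm, sinh_two_mul]; ring

theorem hasDerivAt_sdelta (δ x : ℝ) : HasDerivAt (sdelta δ) (cdelta δ x) x := by
  unfold sdelta cdelta
  split_ifs with h₀ h₁
  · refine (((hasDerivAt_id' x).const_mul (√δ)).sin.div_const √δ).congr_deriv ?_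
    field_simp [(Real.sqrt_pos.2 h₀).ne']
  · exact hasDerivAt_id' x
  · have hs : 0 < √(-δ) := Real.sqrt_pos.2 (neg_pos.2 (lt_of_le_of_ne (not_lt.1 h₀) h₁))
    refine (((hasDerivAt_id' x).const_mul √(-δ)).sinh.div_const √(-δ)).congr_deriv ?_
    field_simp [hs.ne']

theorem hasDerivAt_cdelta (δ x : ℝ) : HasDerivAt (cdelta δ) (-δ * sdelta δ x) x := by
  unfold sdelta cdelta
  split_ifs with h₀ h₁
  · refine ((hasDerivAt_id' x).const_mul (√δ)).cos.congr_deriv ?_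
    field_simp [(Real.sqrt_pos.2 h₀).ne']
    rw [Real.sq_sqrt h₀.le]
    ring
  · simpa [h₁] using hasDerivAt_const x (1 : ℝ)
  · have hδ : δ < 0 := lt_of_le_of_ne (not_lt.1 h₀) h₁
    have hs : 0 < √(-δ) := Real.sqrt_pos.2 (neg_pos.2 hδ)
    refine ((hasDerivAt_id' x).const_mul √(-δ)).cosh.congr_deriv ?_
    field_simp [hs.ne']
    rw [Real.sq_sqrt (neg_nonneg.2 hδ.le)]
    ring

theorem sdelta_pos_of_le {y z : ℝ} (hy : 0 < y) (hyz : y ≤ z) (hz : δ * z ^ 2 < π ^ 2) :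
    0 < sdelta δ y := by
  unfold sdelta
  split_ifs with h₀ h₁
  · have hs := Real.sqrt_pos.2 h₀
    refine div_pos (sin_pos_of_pos_of_lt_pi (mul_pos hs hy) ?_) hs
    have hz' : √δ * z < π :=
      lt_of_pow_lt_pow_left₀ 2 Real.pi_pos.le (by rwa [mul_pow, Real.sq_sqrt h₀.le])
    exact (mul_le_mul_of_nonneg_left hyz hs.le).trans_lt hz'
  · exact hy
  · have hs : 0 < √(-δ) := Real.sqrt_pos.2 (neg_pos.2 (lt_of_le_of_ne (not_lt.1 h₀) h₁))
    exact div_pos (sinh_pos_iff.2 (mul_pos hs hy)) hs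

theorem sdelta_nonneg_of_le {y z : ℝ} (hy : 0 ≤ y) (hyz : y ≤ z) (hz : δ * z ^ 2 < π ^ 2) :
    0 ≤ sdelta δ y := by
  rcases hy.eq_or_lt with rfl | hy
  · rw [sdelta_zero]
  · exact (sdelta_pos_of_le hy hyz hz).le

end GeneralizedSine

theorem sigmaC_eq_ofReal_sdelta_div {K N t θ : ℝ} (hN : 0 < N) (hθ : 0 < θ)
    (h : K * θ ^ 2 < N * π ^ 2) :
    sigmaC K N t θ = ENNReal.ofReal (sdelta (K / N) (t * θ) / sdelta (K / N) θ) := by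
  rw [sigmaC, if_neg h.not_ge]
  rcases lt_trichotomy K 0 with hK | rfl | hK
  · have hKθ : K * θ ^ 2 < 0 := mul_neg_of_neg_of_pos hK (by positivity)
    have hKN : K / N < 0 := div_neg_of_neg_of_pos hK hN
    have hs : 0 < √(-(K / N)) := Real.sqrt_pos.2 (neg_pos.2 hKN)
    simp only [if_neg hKθ.not_gt, if_neg hKθ.ne, if_neg hN.ne', if_pos hN, sdelta,
      if_neg hKN.not_gt, if_neg hKN.ne, neg_div]
    rw [div_div_div_cancel_right₀ hs.ne', mul_comm (√_), mul_comm (√_)]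
  · simp [sdelta, hθ.ne']
  · have hKθ : 0 < K * θ ^ 2 := by positivity
    have hKN : 0 < K / N := div_pos hK hN
    simp only [if_pos hKθ, sdelta, if_pos hKN]
    rw [div_div_div_cancel_right₀ (Real.sqrt_pos.2 hKN).ne', mul_comm (√_), mul_comm (√_)]

section Comparison

variable {a b δ : ℝ}

theorem monotoneOn_wronskian {u u' u'' v v' v'' : ℝ → ℝ}
    (hu : ∀ x ∈ Icc a b, HasDerivAt u (u' x) x) (hu' : ∀ x ∈ Icc a b, HasDerivAt u' (u'' x) x)
    (hv : ∀ x ∈ Icc a b, HasDerivAt v (v' x) x) (hv' : ∀ x ∈ Icc a b, HasDerivAt v' (v'' x) x)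
    (h : ∀ x ∈ Ioo a b, 0 ≤ u x * v'' x - u'' x * v x) :
    MonotoneOn (fun x => u x * v' x - u' x * v x) (Icc a b) := by
  have hW : ∀ x ∈ Icc a b, HasDerivAt (fun x => u x * v' x - u' x * v x)
      (u x * v'' x - u'' x * v x) x := fun x hx =>
    (((hu x hx).mul (hv' x hx)).sub ((hu' x hx).mul (hv x hx))).congr_deriv (by ring)
  exact monotoneOn_of_hasDerivWithinAt_nonneg (convex_Icc a b)
    (fun x hx => (hW x hx).continuousAt.continuousWithinAt)
    (fun x hx => (hW x (interior_subset hx)).hasDerivWithinAt)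
    (fun x hx => h x (by rwa [interior_Icc] at hx))

-- Sturm comparison with `sin (π (x - a) / (b - a))`.
theorem mul_sq_lt_pi_sq_of_pos_supersolution {g g' g'' : ℝ → ℝ} (hab : a < b)
    (hg : ∀ x ∈ Icc a b, HasDerivAt g (g' x) x) (hg' : ∀ x ∈ Icc a b, HasDerivAt g' (g'' x) x)
    (hsup : ∀ x ∈ Ioo a b, g'' x + δ * g x ≤ 0) (hpos : ∀ x ∈ Icc a b, 0 < g x) :
    δ * (b - a) ^ 2 < π ^ 2 := by
  by_contra! hδ
  set m := π / (b - a)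
  have hm : 0 < m := div_pos Real.pi_pos (sub_pos.2 hab)
  have hmb : m * (b - a) = π := div_mul_cancel₀ _ (sub_pos.2 hab).ne'
  have hm2 : m ^ 2 ≤ δ := by
    rw [div_pow, div_le_iff₀ (by nlinarith)]; exact hδ
  have hlin : ∀ x, HasDerivAt (fun x => m * (x - a)) m x := fun x => by
    simpa using ((hasDerivAt_id' x).sub_const a).const_mul m
  have hw : ∀ x ∈ Icc a b, HasDerivAt (fun x => sin (m * (x - a)))
      (m * cos (m * (x - a))) x := fun x _ => ((hlin x).sin).congr_deriv (mul_comm _ _)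
  have hw' : ∀ x ∈ Icc a b, HasDerivAt (fun x => m * cos (m * (x - a)))
      (-m ^ 2 * sin (m * (x - a))) x := fun x _ =>
    (((hlin x).cos).const_mul m).congr_deriv (by ring)
  have hmono := monotoneOn_wronskian hg hg' hw hw' fun x hx => by
    have hsin : 0 ≤ sin (m * (x - a)) := sin_nonneg_of_nonneg_of_le_pi
      (mul_nonneg hm.le (by linarith [hx.1]))
      (hmb ▸ mul_le_mul_of_nonneg_left (by linarith [hx.2]) hm.le)
    nlinarith [mul_nonneg hsin (hpos x (Ioo_subset_Icc_self hx)).le, hsup x hx]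
  have := hmono (left_mem_Icc.2 hab.le) (right_mem_Icc.2 hab.le) hab.le
  simp only [sub_self, mul_zero, sin_zero, cos_zero, hmb, sin_pi, cos_pi] at this
  nlinarith [hpos a (left_mem_Icc.2 hab.le), hpos b (right_mem_Icc.2 hab.le)]

theorem nonneg_of_monotoneOn_wronskian {e e' u u' : ℝ → ℝ} (hab : a ≤ b)
    (he : ∀ x ∈ Icc a b, HasDerivAt e (e' x) x) (hu : ∀ x ∈ Icc a b, HasDerivAt u (u' x) x)
    (hpos : ∀ x ∈ Icc a b, 0 < u x) (hea : e a = 0) (heb : e b = 0)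
    (hmono : MonotoneOn (fun x => e x * u' x - e' x * u x) (Icc a b)) :
    ∀ x ∈ Icc a b, 0 ≤ e x := by
  by_contra! ⟨x, hx, hex⟩
  have hax : a < x := hx.1.lt_of_ne (by rintro rfl; linarith)
  have hxb : x < b := hx.2.lt_of_ne (by rintro rfl; linarith)
  -- `(e / u)' = -W / u²`, and the mean value theorem on both sides of `x` gives `W > 0 > W`
  have hq : ∀ y ∈ Icc a b, HasDerivAt (fun y => e y / u y)
      (-(e y * u' y - e' y * u y) / u y ^ 2) y := fun y hy =>
    ((he y hy).div (hu y hy) (hpos y hy).ne').congr_deriv (by ring)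
  have hqc : ContinuousOn (fun y => e y / u y) (Icc a b) := fun y hy =>
    (hq y hy).continuousAt.continuousWithinAt
  have hqx : e x / u x < 0 := div_neg_of_neg_of_pos hex (hpos x hx)
  obtain ⟨p, hp, hpq⟩ := exists_hasDerivAt_eq_slope _ _ hax
    (hqc.mono (Icc_subset_Icc_right hxb.le))
    (fun y hy => hq y ⟨hy.1.le, hy.2.le.trans hxb.le⟩)
  obtain ⟨q, hq', hqq⟩ := exists_hasDerivAt_eq_slope _ _ hxb
    (hqc.mono (Icc_subset_Icc_left hax.le))
    (fun y hy => hq y ⟨hax.le.trans hy.1.le, hy.2.le⟩)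
  have hpI : p ∈ Icc a b := ⟨hp.1.le, hp.2.le.trans hxb.le⟩
  have hqI : q ∈ Icc a b := ⟨hax.le.trans hq'.1.le, hq'.2.le⟩
  rw [hea, zero_div, sub_zero] at hpq
  rw [heb, zero_div, zero_sub] at hqq
  have hWp : 0 < e p * u' p - e' p * u p := by
    have := (div_lt_iff₀ (pow_pos (hpos p hpI) 2)).1
      (hpq.trans_lt (div_neg_of_neg_of_pos hqx (sub_pos.2 hax)))
    linarith
  have hWq : e q * u' q - e' q * u q < 0 := by
    have := (lt_div_iff₀ (pow_pos (hpos q hqI) 2)).1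
      (by rw [hqq]; exact div_pos (neg_pos.2 hqx) (sub_pos.2 hxb))
    linarith
  linarith [hmono hpI hqI (hp.2.trans hq'.1).le]

theorem exists_pos_sdelta_shift (hδ : δ * (b - a) ^ 2 < π ^ 2) :
    ∃ β > 0, ∀ x ∈ Icc a b, 0 < sdelta δ (x - a + β) := by
  have hev : ∀ᶠ β in 𝓝 (0 : ℝ), δ * (b - a + β) ^ 2 < π ^ 2 :=
    (show Continuous fun β : ℝ => δ * (b - a + β) ^ 2 by fun_prop).continuousAt.eventually_lt
      continuousAt_const (by simpa using hδ)
  obtain ⟨β, hβδ, hβ : 0 < β⟩ :=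
    ((eventually_nhdsWithin_of_eventually_nhds hev).and
      (self_mem_nhdsWithin : Ioi (0 : ℝ) ∈ 𝓝[>] 0)).exists
  exact ⟨β, hβ, fun x hx => sdelta_pos_of_le (by linarith [hx.1])
    (by linarith [hx.2]) hβδ⟩

theorem nonneg_of_supersolution {e e' e'' : ℝ → ℝ} (hab : a ≤ b)
    (hδ : δ * (b - a) ^ 2 < π ^ 2)
    (he : ∀ x ∈ Icc a b, HasDerivAt e (e' x) x) (he' : ∀ x ∈ Icc a b, HasDerivAt e' (e'' x) x)
    (hsup : ∀ x ∈ Ioo a b, e'' x + δ * e x ≤ 0) (hea : e a = 0) (heb : e b = 0) :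
    ∀ x ∈ Icc a b, 0 ≤ e x := by
  obtain ⟨β, -, hU⟩ := exists_pos_sdelta_shift hδ
  have hshift : ∀ x, HasDerivAt (fun x => x - a + β) 1 x := fun x =>
    ((hasDerivAt_id' x).sub_const a).add_const β
  have hs : ∀ x ∈ Icc a b, HasDerivAt (fun x => sdelta δ (x - a + β))
      (cdelta δ (x - a + β)) x := fun x _ =>
    ((hasDerivAt_sdelta δ _).comp x (hshift x)).congr_deriv (mul_one _)
  have hc : ∀ x ∈ Icc a b, HasDerivAt (fun x => cdelta δ (x - a + β))
      (-δ * sdelta δ (x - a + β)) x := fun x _ =>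
    ((hasDerivAt_cdelta δ _).comp x (hshift x)).congr_deriv (mul_one _)
  refine nonneg_of_monotoneOn_wronskian hab he hs hU hea heb
    (monotoneOn_wronskian he he' hs hc fun x hx => ?_)
  nlinarith [mul_nonneg (hU x (Ioo_subset_Icc_self hx)).le (neg_nonneg.2 (hsup x hx))]

theorem sdelta_interpolation_le {g g' g'' : ℝ → ℝ} (hab : a < b)
    (hδ : δ * (b - a) ^ 2 < π ^ 2)
    (hg : ∀ x ∈ Icc a b, HasDerivAt g (g' x) x) (hg' : ∀ x ∈ Icc a b, HasDerivAt g' (g'' x) x)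
    (hsup : ∀ x ∈ Ioo a b, g'' x + δ * g x ≤ 0) {x : ℝ} (hx : x ∈ Icc a b) :
    (g a * sdelta δ (b - x) + g b * sdelta δ (x - a)) / sdelta δ (b - a) ≤ g x := by
  set S := sdelta δ (b - a)
  have hS : S ≠ 0 := (sdelta_pos_of_le (sub_pos.2 hab) le_rfl hδ).ne'
  set Ψ := fun y => (g a * sdelta δ (b - y) + g b * sdelta δ (y - a)) / S
  set Ψ' := fun y => (-(g a * cdelta δ (b - y)) + g b * cdelta δ (y - a)) / S
  have hΨ : ∀ y, HasDerivAt Ψ (Ψ' y) y := fun y => by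
    have h₁ := (hasDerivAt_sdelta δ (b - y)).comp y ((hasDerivAt_id' y).const_sub b)
    have h₂ := (hasDerivAt_sdelta δ (y - a)).comp y ((hasDerivAt_id' y).sub_const a)
    exact ((h₁.const_mul (g a)).add (h₂.const_mul (g b))).div_const S |>.congr_deriv (by simp [Ψ'])
  have hΨ' : ∀ y, HasDerivAt Ψ' (-δ * Ψ y) y := fun y => by
    have h₁ := (hasDerivAt_cdelta δ (b - y)).comp y ((hasDerivAt_id' y).const_sub b)
    have h₂ := (hasDerivAt_cdelta δ (y - a)).comp y ((hasDerivAt_id' y).sub_const a)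
    exact ((h₁.const_mul (g a)).neg.add (h₂.const_mul (g b))).div_const S |>.congr_deriv
      (by simp only [Ψ]; ring)
  have key := nonneg_of_supersolution (e := fun y => g y - Ψ y) hab.le hδ
    (fun y hy => (hg y hy).sub (hΨ y)) (fun y hy => (hg' y hy).sub (hΨ' y))
    (fun y hy => by linarith [hsup y hy])
    (by simp [Ψ, S, sdelta_zero, hS]) (by simp [Ψ, S, sdelta_zero, hS]) x hx
  exact sub_nonneg.1 key

end Comparison

theorem tendsto_symmetric_second_difference {f f' : ℝ → ℝ} {t L : ℝ}
    (hf : ∀ᶠ x in 𝓝 t, HasDerivAt f (f' x) x) (hf' : HasDerivAt f' L t) :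
    Tendsto (fun ε => (f (t + ε) + f (t - ε) - 2 * f t) / ε ^ 2) (𝓝[>] 0) (𝓝 L) := by
  have hplus : Tendsto (fun ε => t + ε) (𝓝 0) (𝓝 t) := by
    simpa using (continuous_const_add t).tendsto 0
  have hminus : Tendsto (fun ε => t - ε) (𝓝 0) (𝓝 t) := by
    simpa using (continuous_sub_left t).tendsto 0
  have hderiv : ∀ᶠ ε in 𝓝[>] 0, HasDerivAt (fun ε => f (t + ε) + f (t - ε) - 2 * f t)
      (f' (t + ε) - f' (t - ε)) ε := by
    refine eventually_nhdsWithin_of_eventually_nhds ?_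
    filter_upwards [hplus.eventually hf, hminus.eventually hf] with ε hp hm
    have hp' := hp.comp ε ((hasDerivAt_id' ε).const_add t)
    have hm' := hm.comp ε ((hasDerivAt_id' ε).const_sub t)
    exact ((hp'.add hm').sub_const _).congr_deriv (by ring)
  -- `(f'(t+ε) - f'(t-ε)) / 2ε` is the mean of the slopes of `f'` at `t` over `±ε`
  have hslope : Tendsto (fun ε => (f' (t + ε) - f' (t - ε)) / (2 * ε)) (𝓝[>] 0) (𝓝 L) := by
    have hp := hf'.tendsto_slope_zero_right
    have hm := hf'.tendsto_slope_zero_left.comp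
      (by simpa using tendsto_neg_nhdsGT_neg (a := (0 : ℝ)))
    have := (hp.add hm).div_const 2
    rw [← two_mul, mul_div_cancel_left₀ _ two_ne_zero] at this
    refine this.congr fun ε => ?_
    simp only [Function.comp_apply, smul_eq_mul, ← sub_eq_add_neg]
    field_simp
    ring
  have hcont : ContinuousAt f t := hf.self_of_nhds.continuousAt
  refine HasDerivAt.lhopital_zero_nhdsGT hderiv
    (Eventually.of_forall fun ε => (hasDerivAt_pow 2 ε).congr_deriv (by ring))
    (eventually_nhdsWithin_of_forall fun ε (hε : 0 < ε) => by positivity) ?_ ?_ hslope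
  · have := ((hcont.tendsto.comp hplus).add (hcont.tendsto.comp hminus)).sub_const (2 * f t)
    simpa [two_mul] using this.mono_left nhdsWithin_le_nhds
  · simpa using ((continuous_pow 2).tendsto (0 : ℝ)).mono_left nhdsWithin_le_nhds

/-- `SynthCD K N h S` is `SigmaConcaveOn K (N - 1) (fun t => h t ^ (1 / (N - 1))) S`. -/
def SigmaConcaveOn (K n : ℝ) (g : ℝ → ℝ) (S : Set ℝ) : Prop :=
  ∀ t₀ ∈ S, ∀ t₁ ∈ S, t₀ < t₁ → ∀ s ∈ Icc (0:ℝ) 1,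
    sigmaC K n (1 - s) (t₁ - t₀) * ENNReal.ofReal (g t₀) +
      sigmaC K n s (t₁ - t₀) * ENNReal.ofReal (g t₁)
      ≤ ENNReal.ofReal (g ((1 - s) * t₀ + s * t₁))

theorem ofReal_mul_add_ofReal_mul_le_ofReal_iff {p q x y z : ℝ} (hp : 0 ≤ p) (hq : 0 ≤ q)
    (hx : 0 ≤ x) (hy : 0 ≤ y) (hz : 0 ≤ z) :
    ENNReal.ofReal p * ENNReal.ofReal x + ENNReal.ofReal q * ENNReal.ofReal y ≤ ENNReal.ofReal z ↔
      p * x + q * y ≤ z := by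
  rw [← ENNReal.ofReal_mul hp, ← ENNReal.ofReal_mul hq,
    ← ENNReal.ofReal_add (mul_nonneg hp hx) (mul_nonneg hq hy), ENNReal.ofReal_le_ofReal_iff hz]

namespace SigmaConcaveOn

variable {K n : ℝ} {g : ℝ → ℝ} {S : Set ℝ}

theorem add_le_two_mul_cdelta (hS : SigmaConcaveOn K n g S) (hn : 0 < n)
    (hg : ∀ x ∈ S, 0 ≤ g x) {t ε : ℝ} (hε : 0 < ε) (hKε : K * (2 * ε) ^ 2 < n * π ^ 2)
    (ht : t ∈ S) (h₀ : t - ε ∈ S) (h₁ : t + ε ∈ S) :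
    g (t - ε) + g (t + ε) ≤ 2 * cdelta (K / n) ε * g t := by
  have hmid := hS (t - ε) h₀ (t + ε) h₁ (by linarith) (1 / 2) ⟨by norm_num, by norm_num⟩
  have hδ : K / n * (2 * ε) ^ 2 < π ^ 2 := by
    rw [div_mul_eq_mul_div, div_lt_iff₀ hn]; linarith
  have hs : 0 < sdelta (K / n) ε := sdelta_pos_of_le hε (by linarith) hδ
  have hsc : 0 < 2 * sdelta (K / n) ε * cdelta (K / n) ε := by
    rw [← sdelta_two_mul]; exact sdelta_pos_of_le (by positivity) le_rfl hδ
  have hc : 0 < cdelta (K / n) ε := pos_of_mul_pos_right hsc (by positivity)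
  rw [show (1 : ℝ) - 1 / 2 = 1 / 2 by norm_num, show t + ε - (t - ε) = 2 * ε by ring,
    show 1 / 2 * (t - ε) + 1 / 2 * (t + ε) = t by ring,
    sigmaC_eq_ofReal_sdelta_div hn (by positivity) hKε, show 1 / 2 * (2 * ε) = ε by ring,
    sdelta_two_mul, ofReal_mul_add_ofReal_mul_le_ofReal_iff (by positivity) (by positivity)
      (hg _ h₀) (hg _ h₁) (hg t ht)] at hmid
  have : (g (t - ε) + g (t + ε)) / (2 * cdelta (K / n) ε) ≤ g t := by
    convert hmid using 1; field_simp
  rw [div_le_iff₀ (by positivity)] at this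
  linarith

theorem second_deriv_add_le (hS : SigmaConcaveOn K n g S) (hn : 0 < n)
    (hg : ∀ x ∈ S, 0 ≤ g x) {t g'' : ℝ} {g' : ℝ → ℝ} (ht : S ∈ 𝓝 t)
    (hg' : ∀ᶠ x in 𝓝 t, HasDerivAt g (g' x) x) (hg'' : HasDerivAt g' g'' t) :
    g'' + K / n * g t ≤ 0 := by
  have hcdelta := tendsto_symmetric_second_difference (t := 0)
    (Eventually.of_forall (hasDerivAt_cdelta (K / n))) ((hasDerivAt_sdelta (K / n) 0).const_mul _)
  have hclose : ∀ᶠ ε in 𝓝 (0 : ℝ), t - ε ∈ S ∧ t + ε ∈ S ∧ K * (2 * ε) ^ 2 < n * π ^ 2 := by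
    have hcont : Continuous fun ε : ℝ => (t - ε, t + ε, K * (2 * ε) ^ 2) := by fun_prop
    refine hcont.continuousAt.eventually_mem (s := S ×ˢ S ×ˢ Iio (n * π ^ 2)) ?_
    simpa using prod_mem_nhds ht (prod_mem_nhds ht (Iio_mem_nhds (by positivity)))
  have hev : ∀ᶠ ε in 𝓝[>] 0, (g (t + ε) + g (t - ε) - 2 * g t) / ε ^ 2 ≤
      g t * ((cdelta (K / n) (0 + ε) + cdelta (K / n) (0 - ε) - 2 * cdelta (K / n) 0) / ε ^ 2) := by
    filter_upwards [eventually_nhdsWithin_of_eventually_nhds hclose, self_mem_nhdsWithin]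
      with ε ⟨h₀, h₁, hKε⟩ (hε : 0 < ε)
    have := hS.add_le_two_mul_cdelta hn hg hε hKε (mem_of_mem_nhds ht) h₀ h₁
    rw [zero_add, zero_sub, cdelta_neg, cdelta_zero, ← mul_div_assoc]
    gcongr
    linarith
  have := le_of_tendsto_of_tendsto (tendsto_symmetric_second_difference hg' hg'')
    (hcdelta.const_mul (g t)) hev
  rw [cdelta_zero] at this
  linarith

end SigmaConcaveOn

section

variable {K n : ℝ} {g : ℝ → ℝ}

theorem sigmaConcaveOn_of_supersolution {S : Set ℝ} {g' g'' : ℝ → ℝ} (hS : S.OrdConnected)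
    (hn : 0 < n) (hg : ∀ x ∈ S, HasDerivAt g (g' x) x) (hg' : ∀ x ∈ S, HasDerivAt g' (g'' x) x)
    (hsup : ∀ x ∈ S, g'' x + K / n * g x ≤ 0) (hpos : ∀ x ∈ S, 0 < g x) :
    SigmaConcaveOn K n g S := by
  intro t₀ h₀ t₁ h₁ hlt s hs
  have hI : Icc t₀ t₁ ⊆ S := hS.out h₀ h₁
  have hδ : K / n * (t₁ - t₀) ^ 2 < π ^ 2 :=
    mul_sq_lt_pi_sq_of_pos_supersolution hlt (fun x hx => hg x (hI hx))
      (fun x hx => hg' x (hI hx)) (fun x hx => hsup x (hI (Ioo_subset_Icc_self hx)))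
      (fun x hx => hpos x (hI hx))
  have hθ : 0 < t₁ - t₀ := sub_pos.2 hlt
  have hKθ : K * (t₁ - t₀) ^ 2 < n * π ^ 2 := by
    rwa [div_mul_eq_mul_div, div_lt_iff₀ hn, mul_comm (π ^ 2)] at hδ
  have hS' : 0 < sdelta (K / n) (t₁ - t₀) := sdelta_pos_of_le hθ le_rfl hδ
  have hcoeff : ∀ r ∈ Icc (0 : ℝ) 1,
      0 ≤ sdelta (K / n) (r * (t₁ - t₀)) / sdelta (K / n) (t₁ - t₀) := fun r hr =>
    div_nonneg (sdelta_nonneg_of_le (by nlinarith [hr.1]) (by nlinarith [hr.2]) hδ) hS'.le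
  have hx : (1 - s) * t₀ + s * t₁ ∈ Icc t₀ t₁ :=
    ⟨by nlinarith [mul_nonneg hs.1 hθ.le], by nlinarith [mul_nonneg (sub_nonneg.2 hs.2) hθ.le]⟩
  rw [sigmaC_eq_ofReal_sdelta_div hn hθ hKθ, sigmaC_eq_ofReal_sdelta_div hn hθ hKθ,
    ofReal_mul_add_ofReal_mul_le_ofReal_iff (hcoeff _ ⟨by linarith [hs.2], by linarith [hs.1]⟩)
      (hcoeff s hs) (hpos _ h₀).le (hpos _ h₁).le (hpos _ (hI hx)).le]
  have := sdelta_interpolation_le hlt hδ (fun x hx => hg x (hI hx)) (fun x hx => hg' x (hI hx))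
    (fun x hx => hsup x (hI (Ioo_subset_Icc_self hx))) hx
  rw [show t₁ - ((1 - s) * t₀ + s * t₁) = (1 - s) * (t₁ - t₀) by ring,
    show (1 - s) * t₀ + s * t₁ - t₀ = s * (t₁ - t₀) by ring] at this
  convert this using 1
  ring

theorem sigmaConcaveOn_Ioo_iff {a b : ℝ} (hn : 0 < n) (hg : ContDiffOn ℝ 2 g (Ioo a b))
    (hpos : ∀ x ∈ Ioo a b, 0 < g x) :
    SigmaConcaveOn K n g (Ioo a b) ↔ ∀ t ∈ Ioo a b, deriv (deriv g) t + K / n * g t ≤ 0 := by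
  have hg' : ∀ x ∈ Ioo a b, HasDerivAt g (deriv g x) x := fun x hx =>
    ((hg.differentiableOn two_ne_zero).differentiableAt (isOpen_Ioo.mem_nhds hx)).hasDerivAt
  have hg'' : ∀ x ∈ Ioo a b, HasDerivAt (deriv g) (deriv (deriv g) x) x := fun x hx =>
    (((hg.deriv_of_isOpen isOpen_Ioo (by norm_num)).differentiableOn one_ne_zero).differentiableAt
      (isOpen_Ioo.mem_nhds hx)).hasDerivAt
  refine ⟨fun hS t ht => ?_, fun hsup => ?_⟩
  · exact hS.second_deriv_add_le hn (fun x hx => (hpos x hx).le) (isOpen_Ioo.mem_nhds ht)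
      (eventually_of_mem (isOpen_Ioo.mem_nhds ht) hg') (hg'' t ht)
  · exact sigmaConcaveOn_of_supersolution ordConnected_Ioo hn hg' hg'' hsup hpos

end

theorem weak_concavity_iff_ode_general (K N D : ℝ) (hN : 1 < N)
    (h : ℝ → ℝ) (hsm : ContDiffOn ℝ 2 h (Set.Ioo 0 D))
    (hpos : ∀ t ∈ Set.Ioo (0:ℝ) D, 0 < h t) :
    SynthCD K N h (Set.Ioo 0 D) ↔
      ∀ t ∈ Set.Ioo (0:ℝ) D,
        deriv (deriv fun s => h s ^ ((1:ℝ) / (N - 1))) t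
          + K / (N - 1) * h t ^ ((1:ℝ) / (N - 1)) ≤ 0 :=
  sigmaConcaveOn_Ioo_iff (sub_pos.2 hN)
    (fun x hx => (hsm x hx).rpow_const_of_ne (hpos x hx).ne')
    (fun x hx => Real.rpow_pos_of_pos (hpos x hx) _)

/-- For positive `C²` densities, the weak `(K,N)`-concavity inequality is equivalent to
the differential inequality `(h^{1/(N-1)})'' + K/(N-1) h^{1/(N-1)} ≤ 0` on `(0,D)`. -/
theorem weak_concavity_iff_ode (K N D : ℝ) (hN : 1 < N) (hD : 0 < D)
    (h : ℝ → ℝ) (hsm : ContDiffOn ℝ 2 h (Set.Ioo 0 D))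
    (hpos : ∀ t ∈ Set.Ioo (0:ℝ) D, 0 < h t) :
    SynthCD K N h (Set.Ioo 0 D) ↔
      ∀ t ∈ Set.Ioo (0:ℝ) D,
        deriv (deriv fun s => h s ^ ((1:ℝ) / (N - 1))) t
          + K / (N - 1) * h t ^ ((1:ℝ) / (N - 1)) ≤ 0 :=
  weak_concavity_iff_ode_general K N D hN h hsm hpos

end CDMMS
end
end
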